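/- arXiv:1904.02450 — 2 statements merged into one kernel-verified Lean document; each statement's English description precedes it below -/
import Mathlib

section
/- Let ε₁, ε₂ ∈ (0,1) with R := log(ε₁/(1-ε₁)) + log(ε₂/(1-ε₂)) < 0. Define ε₁' = 2ε₁ - ε₁² and ε₂' = ε₂². Then log(ε₁'/(1-ε₁')) + log(ε₂'/(1-ε₂')) < R. -/
theorem minus_step_logodds_decrease (e1 e2 : ℝ)
    (h1 : e1 ∈ Set.Ioo (0:ℝ) 1) (h2 : e2 ∈ Set.Ioo (0:ℝ) 1)
    (hR : Real.logb 2 (e1 / (1 - e1)) + Real.logb 2 (e2 / (1 - e2)) < 0) :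
    Real.logb 2 ((2*e1 - e1^2) / (1 - (2*e1 - e1^2))) +
      Real.logb 2 (e2^2 / (1 - e2^2)) <
    Real.logb 2 (e1 / (1 - e1)) + Real.logb 2 (e2 / (1 - e2)) := by
  obtain ⟨he1, he1'⟩ := h1
  obtain ⟨he2, he2'⟩ := h2
  have hd1 : (0:ℝ) < 1 - e1 := by linarith
  have hd2 : (0:ℝ) < 1 - e2 := by linarith
  have hn1 : (0:ℝ) < 2*e1 - e1^2 := by nlinarith
  have hnd1 : (0:ℝ) < 1 - (2*e1 - e1^2) := by nlinarith
  have hn2 : (0:ℝ) < e2^2 := by positivity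
  have hnd2 : (0:ℝ) < 1 - e2^2 := by nlinarith
  have hA : (0:ℝ) < e1 / (1 - e1) * (e2 / (1 - e2)) := by positivity
  have hB : (0:ℝ) < (2*e1 - e1^2) / (1 - (2*e1 - e1^2)) * (e2^2 / (1 - e2^2)) := by positivity
  rw [← Real.logb_mul (by positivity) (by positivity)] at hR ⊢
  rw [← Real.logb_mul (by positivity) (by positivity)]
  have hlt1 : e1 / (1 - e1) * (e2 / (1 - e2)) < 1 := by
    by_contra h
    push_neg at h
    have := Real.logb_nonneg (by norm_num : (1:ℝ) < 2) h
    linarith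
  have hsum : e1 + e2 < 1 := by
    have h' : e1 * e2 < (1 - e1) * (1 - e2) := by
      have := (div_mul_div_comm e1 (1-e1) e2 (1-e2)) ▸ hlt1
      rw [div_lt_one (by positivity)] at this
      linarith
    nlinarith
  apply Real.logb_lt_logb (by norm_num) hB
  rw [div_mul_div_comm, div_mul_div_comm, div_lt_div_iff₀ (by positivity) (by positivity)]
  have key : (0:ℝ) < e1 * e2 * ((1 - e1) * (1 - e2)) * (1 - e1 - e2) := by
    apply mul_pos (by positivity) (by linarith)
  nlinarith [key]
end

section
/- Consider a sequence (ε₁ₙ, ε₂ₙ) in (0,1)² where at each step n either (ε₁,ε₂) ↦ (ε₁², 2ε₂ - ε₂²) or (ε₁,ε₂) ↦ (2ε₁ - ε₁², ε₂²). If log(ε₁₀/(1-ε₁₀)) + log(ε₂₀/(1-ε₂₀)) = A < 0, then for every n, ε₁ₙ · ε₂ₙ < 2^A. -/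
lemma key_step (x y : ℝ) (hx0 : 0 < x) (hx1 : x < 1) (hy0 : 0 < y) (hy1 : y < 1)
    (h : x / (1 - x) * (y / (1 - y)) < 1) :
    x^2 / (1 - x^2) * ((2*y - y^2) / (1 - (2*y - y^2))) ≤ x / (1 - x) * (y / (1 - y)) := by
  have h1x : (0:ℝ) < 1 - x := by linarith
  have h1y : (0:ℝ) < 1 - y := by linarith
  have h1x2 : (0:ℝ) < 1 - x^2 := by nlinarith
  have e : 1 - (2*y - y^2) = (1-y)^2 := by ring
  rw [e, div_mul_div_comm, div_mul_div_comm, div_le_div_iff₀ (by positivity) (by positivity)]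
  have h' : x * y < (1 - x) * (1 - y) := by
    rw [div_mul_div_comm, div_lt_one (by positivity)] at h
    exact h
  rcases le_or_gt (x + y) 1 with hc | hc
  · nlinarith [mul_pos hx0 hy0, mul_pos (mul_pos hx0 hy0) h1y, mul_pos h1x h1y,
      mul_pos (mul_pos hx0 hy0) (mul_pos h1x h1y)]
  · nlinarith [mul_pos hx0 hy0, mul_pos (mul_pos hx0 hy0) h1y, mul_pos h1x h1y,
      mul_pos (mul_pos hx0 hy0) (mul_pos h1x h1y),
      mul_pos (mul_pos hx0 hy0) (mul_pos hy0 h1y)]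

theorem product_lt_gamma (e1 e2 : ℕ → ℝ) (A : ℝ)
    (hmem : ∀ n, e1 n ∈ Set.Ioo (0:ℝ) 1 ∧ e2 n ∈ Set.Ioo (0:ℝ) 1)
    (hstep : ∀ n,
      (e1 (n+1) = (e1 n)^2 ∧ e2 (n+1) = 2 * e2 n - (e2 n)^2) ∨
      (e1 (n+1) = 2 * e1 n - (e1 n)^2 ∧ e2 (n+1) = (e2 n)^2))
    (hA : Real.logb 2 (e1 0 / (1 - e1 0)) + Real.logb 2 (e2 0 / (1 - e2 0)) = A)
    (hAneg : A < 0) :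
    ∀ n, e1 n * e2 n < (2:ℝ) ^ A := by
  set P : ℕ → ℝ := fun n => e1 n / (1 - e1 n) * (e2 n / (1 - e2 n)) with hP
  have h2A : (2:ℝ) ^ A < 1 := Real.rpow_lt_one_of_one_lt_of_neg one_lt_two hAneg
  have hP0 : P 0 = (2:ℝ) ^ A := by
    have h1 := (hmem 0).1
    have h2 := (hmem 0).2
    have hp1 : 0 < e1 0 / (1 - e1 0) := by
      apply div_pos h1.1; linarith [h1.2]
    have hp2 : 0 < e2 0 / (1 - e2 0) := by
      apply div_pos h2.1; linarith [h2.2]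
    have : Real.logb 2 (P 0) = A := by
      rw [hP]
      simp only []
      rw [Real.logb, Real.log_mul (ne_of_gt hp1) (ne_of_gt hp2), add_div]
      exact hA
    rw [← this, Real.rpow_logb two_pos (by norm_num) (by positivity)]
  have hPle : ∀ n, P n ≤ (2:ℝ) ^ A := by
    intro n
    induction n with
    | zero => exact le_of_eq hP0
    | succ n ih =>
      have h1 := (hmem n).1
      have h2 := (hmem n).2
      have hlt1 : P n < 1 := lt_of_le_of_lt ih h2A
      rcases hstep n with ⟨ha, hb⟩ | ⟨ha, hb⟩
      · have := key_step (e1 n) (e2 n) h1.1 h1.2 h2.1 h2.2 hlt1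
        calc P (n+1) = (e1 n)^2 / (1 - (e1 n)^2) *
              ((2 * e2 n - (e2 n)^2) / (1 - (2 * e2 n - (e2 n)^2))) := by
              rw [hP]; simp only []; rw [ha, hb]
          _ ≤ P n := this
          _ ≤ _ := ih
      · have hlt1' : e2 n / (1 - e2 n) * (e1 n / (1 - e1 n)) < 1 := by
          rw [mul_comm]; exact hlt1
        have := key_step (e2 n) (e1 n) h2.1 h2.2 h1.1 h1.2 hlt1'
        calc P (n+1) = (e2 n)^2 / (1 - (e2 n)^2) *
              ((2 * e1 n - (e1 n)^2) / (1 - (2 * e1 n - (e1 n)^2))) := by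
              rw [hP]; simp only []; rw [ha, hb]; ring
          _ ≤ e2 n / (1 - e2 n) * (e1 n / (1 - e1 n)) := this
          _ = P n := mul_comm _ _
          _ ≤ _ := ih
  intro n
  have h1 := (hmem n).1
  have h2 := (hmem n).2
  have hx0 := h1.1; have hx1 := h1.2; have hy0 := h2.1; have hy1 := h2.2
  have hlt : e1 n * e2 n < P n := by
    rw [hP]; simp only []
    rw [div_mul_div_comm, lt_div_iff₀ (by nlinarith)]
    nlinarith [mul_pos hx0 hy0, mul_lt_mul_of_pos_right hx1 hy0, mul_pos (mul_pos hx0 hy0) hx0]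
  exact lt_of_lt_of_le hlt (hPle n)
end
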